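/- Fix n ∈ ℕ, α > 0, M > 0, λ ≥ 0, a symmetric matrix W ∈ ℝ^{n×n} (W_{ij} = W_{ji}), and vectors μ, f₀ ∈ ℝⁿ. Define E : ℝⁿ → ℝ by E(f) = (1/2)Σ_{i=1}^n (f_i − μ_i)² + (λ/2)Σ_{i=1}^n (f_i − (f₀)_i)² − (1/(4M)) Σ_{i,j=1}^n W_{ij} Σ_α(f_i − f_j). Then E is differentiable on ℝⁿ and for every f ∈ ℝⁿ and every k, its partial derivative is ∂E/∂f_k (f) = (1+λ) f_k − μ_k − λ (f₀)_k − (1/(2M)) Σ_{j=1}^n W_{kj} σ_α(f_k − f_j). Consequently the gradient descent of E is the discrete Wilson–Cowan-type equation ḟ_k = −(1+λ) f_k + μ_k + λ(f₀)_k + (1/(2M)) Σ_j W_{kj} σ_α(f_k − f_j). -/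

import Mathlib

open scoped BigOperators

/-- The piecewise affine sigmoid `σ_α(ρ) = min{1, max{αρ, -1}}`. -/
noncomputable def sigmoid (α : ℝ) (ρ : ℝ) : ℝ :=
  min 1 (max (α * ρ) (-1))

/-- The antiderivative `Σ_α(ρ) = ∫₀^ρ σ_α(s) ds` of the sigmoid vanishing at `0`. -/
noncomputable def sigmoidPrimitive (α : ℝ) (ρ : ℝ) : ℝ :=
  ∫ s in (0:ℝ)..ρ, sigmoid α s

/-- The discrete Wilson–Cowan energy
`E(f) = ½ Σᵢ (fᵢ - μᵢ)² + (λ/2) Σᵢ (fᵢ - (f₀)ᵢ)² - (1/(4M)) Σᵢⱼ Wᵢⱼ Σ_α(fᵢ - fⱼ)`. -/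
noncomputable def wcEnergy (n : ℕ) (α M lam : ℝ) (W : Fin n → Fin n → ℝ)
    (μ f₀ : Fin n → ℝ) (f : Fin n → ℝ) : ℝ :=
  (1/2) * ∑ i, (f i - μ i)^2 + (lam/2) * ∑ i, (f i - f₀ i)^2
    - (1/(4*M)) * ∑ i, ∑ j, W i j * sigmoidPrimitive α (f i - f j)

/-! Differentiate `E` along an arbitrary curve `u` with velocity `u'`: each `Σ_α` term contributes
`W i j σ_α(uᵢ - uⱼ) (u'ᵢ - u'ⱼ)`. Swapping `i` and `j` in the `u'ⱼ` half and using the symmetry of `W`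
and the oddness of `σ_α` turns the interaction sum into `2 Σᵢⱼ W i j σ_α(uᵢ - uⱼ) u'ᵢ`. The partial
derivative is the case `u = Function.update f k`, whose velocity is `Pi.single k 1`. -/

open Finset

lemma sigmoid_neg (α x : ℝ) : sigmoid α (-x) = -sigmoid α x := by
  simp only [sigmoid, mul_neg, min_def, max_def]
  split_ifs <;> linarith

lemma hasDerivAt_sigmoidPrimitive (α x : ℝ) :
    HasDerivAt (sigmoidPrimitive α) (sigmoid α x) x :=
  have hσ : Continuous (sigmoid α) := by unfold sigmoid; fun_prop
  (hσ.integral_hasStrictDerivAt 0 x).hasDerivAt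

@[fun_prop]
lemma differentiable_sigmoidPrimitive (α : ℝ) : Differentiable ℝ (sigmoidPrimitive α) :=
  fun x => (hasDerivAt_sigmoidPrimitive α x).differentiableAt

lemma sum_sum_mul_sub_of_symm_of_odd {ι : Type*} [Fintype ι] {W : ι → ι → ℝ}
    (hW : ∀ i j, W i j = W j i) {g : ℝ → ℝ} (hg : ∀ x, g (-x) = -g x) (x v : ι → ℝ) :
    ∑ i, ∑ j, W i j * g (x i - x j) * (v i - v j) =
      2 * ∑ i, ∑ j, W i j * g (x i - x j) * v i := by
  have hswap : ∑ i, ∑ j, W i j * g (x i - x j) * v j =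
      -∑ i, ∑ j, W i j * g (x i - x j) * v i := by
    rw [sum_comm, ← sum_neg_distrib]
    refine sum_congr rfl fun i _ => ?_
    rw [← sum_neg_distrib]
    refine sum_congr rfl fun j _ => ?_
    rw [hW, ← neg_sub, hg]
    ring
  simp only [mul_sub, sum_sub_distrib, hswap]
  ring

lemma HasDerivAt.wcEnergy_comp {n : ℕ} {α M lam : ℝ} {W : Fin n → Fin n → ℝ}
    {μ f₀ : Fin n → ℝ} {u : ℝ → Fin n → ℝ} {u' : Fin n → ℝ} {t : ℝ}
    (hu : HasDerivAt u u' t) :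
    HasDerivAt (fun s => wcEnergy n α M lam W μ f₀ (u s))
      (∑ i, (u t i - μ i + lam * (u t i - f₀ i)) * u' i
        - 1 / (4 * M) * ∑ i, ∑ j, W i j * sigmoid α (u t i - u t j) * (u' i - u' j)) t := by
  have hcoord : ∀ i, HasDerivAt (fun s => u s i) (u' i) t := hasDerivAt_pi.1 hu
  have hquad (c : Fin n → ℝ) : HasDerivAt (fun s => ∑ i, (u s i - c i) ^ 2)
      (∑ i, 2 * (u t i - c i) * u' i) t :=
    HasDerivAt.fun_sum fun i _ => by
      simpa using ((hcoord i).sub_const (c i)).fun_pow 2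
  have hint : HasDerivAt (fun s => ∑ i, ∑ j, W i j * sigmoidPrimitive α (u s i - u s j))
      (∑ i, ∑ j, W i j * sigmoid α (u t i - u t j) * (u' i - u' j)) t :=
    HasDerivAt.fun_sum fun i _ => HasDerivAt.fun_sum fun j _ => by
      simpa [mul_assoc] using ((hasDerivAt_sigmoidPrimitive α _).comp t
        ((hcoord i).sub (hcoord j))).const_mul (W i j)
  refine ((((hquad μ).const_mul (1 / 2)).fun_add ((hquad f₀).const_mul (lam / 2))).fun_sub
    (hint.const_mul (1 / (4 * M)))).congr_deriv ?_
  simp only [mul_sum, ← sum_add_distrib]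
  congr 1
  refine sum_congr rfl fun i _ => ?_
  ring

theorem wcEnergy_partial_deriv_general (n : ℕ) (α M lam : ℝ)
    (W : Fin n → Fin n → ℝ) (hW : ∀ i j, W i j = W j i)
    (μ f₀ : Fin n → ℝ) :
    Differentiable ℝ (wcEnergy n α M lam W μ f₀) ∧
    ∀ (f : Fin n → ℝ) (k : Fin n),
      HasDerivAt (fun t : ℝ => wcEnergy n α M lam W μ f₀ (Function.update f k t))
        ((1 + lam) * f k - μ k - lam * f₀ k
          - (1/(2*M)) * ∑ j, W k j * sigmoid α (f k - f j)) (f k) := by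
  refine ⟨by unfold wcEnergy; fun_prop, fun f k => ?_⟩
  have h := (hasDerivAt_update f k (f k)).wcEnergy_comp (α := α) (M := M) (lam := lam) (W := W)
    (μ := μ) (f₀ := f₀)
  rw [Function.update_eq_self, sum_sum_mul_sub_of_symm_of_odd hW (sigmoid_neg α)] at h
  convert h using 1
  simp only [one_div, mul_inv_rev, Pi.single_apply, mul_ite, mul_one, mul_zero, sum_ite_eq',
    mem_univ, ↓reduceIte, sum_ite_irrel, sum_const_zero]
  ring

/-- The discrete Wilson–Cowan energy is differentiable and its `k`-th partial derivative
is `(1+λ) fₖ - μₖ - λ(f₀)ₖ - (1/(2M)) Σⱼ Wₖⱼ σ_α(fₖ - fⱼ)`; consequently its gradient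
descent is the discrete Wilson–Cowan equation. -/
theorem wcEnergy_partial_deriv (n : ℕ) (α M lam : ℝ) (hα : 0 < α) (hM : 0 < M)
    (hlam : 0 ≤ lam) (W : Fin n → Fin n → ℝ) (hW : ∀ i j, W i j = W j i)
    (μ f₀ : Fin n → ℝ) :
    Differentiable ℝ (wcEnergy n α M lam W μ f₀) ∧
    ∀ (f : Fin n → ℝ) (k : Fin n),
      HasDerivAt (fun t : ℝ => wcEnergy n α M lam W μ f₀ (Function.update f k t))
        ((1 + lam) * f k - μ k - lam * f₀ k
          - (1/(2*M)) * ∑ j, W k j * sigmoid α (f k - f j)) (f k) :=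
  wcEnergy_partial_deriv_general n α M lam W hW μ f₀
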